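/- arXiv:2405.11573 — 2 statements merged into one kernel-verified Lean document; each statement's English description precedes it below -/
import Mathlib

section
/- Consider the mixture data model on ℝ²: μ₁ uniform on the unit circle, μ₂ = R(θ)μ₁ a rotation of μ₁ by a fixed angle θ ∈ (0, π). For any fixed measurable classifier h : ℝ² → {0,1}, the expected accuracy over the random choice of μ₁ (classes drawn as N(μ₁, σ²I) vs N(μ₂, σ²I)) equals 1/2. -/
/-!
Write `f φ` for the probability that `h` answers `false` when the means are `(cos φ, sin φ)`.
The accuracy at angle `φ` is `(f φ + 1 - f (φ + θ)) / 2`, and since `f` is `2π`-periodic the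
shift by `θ` does not change its average over a period, so the average accuracy is `1/2`.
The only analytic input is that `f` is measurable, which follows by writing `N(m, σ²I)` as the
translate of `N(0, σ²I)` by `m`.
-/

open MeasureTheory ProbabilityTheory Real

open scoped NNReal ENNReal

lemma gaussianReal_prod_eq_map_add (m : ℝ × ℝ) (v : ℝ≥0) :
    (gaussianReal m.1 v).prod (gaussianReal m.2 v)
      = ((gaussianReal 0 v).prod (gaussianReal 0 v)).map (· + m) := by
  have hmap : (· + m) = Prod.map (· + m.1) (· + m.2) := rfl
  rw [hmap, ← Measure.map_prod_map _ _ (measurable_add_const _) (measurable_add_const _),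
    gaussianReal_map_add_const, gaussianReal_map_add_const, zero_add, zero_add]

lemma measurable_measure_preimage_add_const {G : Type*} [AddGroup G] [MeasurableSpace G]
    [MeasurableAdd₂ G] (ν : Measure G) [SFinite ν] {S : Set G} (hS : MeasurableSet S) :
    Measurable fun m => ν ((· + m) ⁻¹' S) :=
  measurable_measure_prodMk_left (s := {p : G × G | p.2 + p.1 ∈ S}) (hS.preimage (by fun_prop))

lemma measurable_gaussianReal_prod_real {α : Type*} [MeasurableSpace α] {m₁ m₂ : α → ℝ}
    (hm₁ : Measurable m₁) (hm₂ : Measurable m₂) (v : ℝ≥0) {S : Set (ℝ × ℝ)}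
    (hS : MeasurableSet S) :
    Measurable fun a => ((gaussianReal (m₁ a) v).prod (gaussianReal (m₂ a) v)).real S := by
  have hm : Measurable fun m : ℝ × ℝ => (gaussianReal m.1 v).prod (gaussianReal m.2 v) S := by
    simp_rw [gaussianReal_prod_eq_map_add, Measure.map_apply (measurable_add_const _) hS]
    exact measurable_measure_preimage_add_const _ hS
  exact (hm.comp (hm₁.prodMk hm₂)).ennreal_toReal

theorem Function.Periodic.setIntegral_Ico_comp_add {E : Type*} [NormedAddCommGroup E]
    [NormedSpace ℝ E] {f : ℝ → E} {T : ℝ} (hf : Function.Periodic f T) (hT : 0 ≤ T)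
    (c : ℝ≥0∞) (s : ℝ) :
    ∫ x in Set.Ico 0 T, f (x + s) ∂(c • volume) = ∫ x in Set.Ico 0 T, f x ∂(c • volume) := by
  rw [Measure.restrict_smul, integral_smul_measure, integral_smul_measure,
    integral_Ico_eq_integral_Ioc, integral_Ico_eq_integral_Ioc,
    ← intervalIntegral.integral_of_le hT, ← intervalIntegral.integral_of_le hT,
    intervalIntegral.integral_comp_add_right, zero_add, add_comm T,
    hf.intervalIntegral_add_eq s 0, zero_add]

lemma isProbabilityMeasure_uniform_Ico {T : ℝ} (hT : 0 < T) :
    IsProbabilityMeasure (((ENNReal.ofReal T)⁻¹ • volume).restrict (Set.Ico 0 T)) :=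
  ⟨by rw [Measure.restrict_apply_univ, Measure.smul_apply, Real.volume_Ico, sub_zero, smul_eq_mul,
    ENNReal.inv_mul_cancel (by simpa using hT) ENNReal.ofReal_ne_top]⟩

lemma toReal_measure_setOf_true_eq_one_sub {α : Type*} [MeasurableSpace α] (μ : Measure α)
    [IsProbabilityMeasure μ] {h : α → Bool} (hh : Measurable h) :
    (μ {x | h x = true}).toReal = 1 - μ.real {x | h x = false} := by
  rw [← probReal_compl_eq_one_sub (s := {x | h x = false})
    (hh (measurableSet_singleton false))]
  congr 2
  ext x
  simp

theorem stmt_12_general (θ : ℝ) (σ2 : NNReal)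
    (h : ℝ × ℝ → Bool) (hh : Measurable h) :
    ∫ φ in Set.Ico (0 : ℝ) (2 * π),
        ((1 : ℝ) / 2 *
            (((gaussianReal (cos φ) σ2).prod (gaussianReal (sin φ) σ2))
              {x : ℝ × ℝ | h x = false}).toReal
          + (1 : ℝ) / 2 *
            (((gaussianReal (cos (φ + θ)) σ2).prod (gaussianReal (sin (φ + θ)) σ2))
              {x : ℝ × ℝ | h x = true}).toReal)
        ∂((ENNReal.ofReal (2 * π))⁻¹ • volume) = 1 / 2 := by
  set μ := ((ENNReal.ofReal (2 * π))⁻¹ • volume).restrict (Set.Ico 0 (2 * π))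
  have : IsProbabilityMeasure μ := isProbabilityMeasure_uniform_Ico two_pi_pos
  set S : Set (ℝ × ℝ) := {x | h x = false}
  have hS : MeasurableSet S := hh (measurableSet_singleton false)
  set f : ℝ → ℝ := fun φ => ((gaussianReal (cos φ) σ2).prod (gaussianReal (sin φ) σ2)).real S
  have hf : Function.Periodic f (2 * π) := fun φ => by simp [f]
  have hfm : Measurable f := measurable_gaussianReal_prod_real measurable_cos measurable_sin σ2 hS
  have hbdd (φ : ℝ) : ‖f φ‖ ≤ 1 := by
    rw [Real.norm_of_nonneg measureReal_nonneg]
    exact measureReal_le_one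
  have hfi : Integrable f μ := .of_bound hfm.aestronglyMeasurable 1 (ae_of_all _ hbdd)
  have hfθ : Integrable (fun φ => f (φ + θ)) μ :=
    .of_bound (hfm.comp (measurable_add_const θ)).aestronglyMeasurable 1
      (ae_of_all _ fun φ => hbdd (φ + θ))
  have hdiff : Integrable (fun φ => f φ - f (φ + θ)) μ := hfi.sub hfθ
  calc _ = ∫ φ, (1 / 2 + 1 / 2 * (f φ - f (φ + θ))) ∂μ := by
        congr 1; funext φ
        rw [toReal_measure_setOf_true_eq_one_sub _ hh]
        simp only [f, measureReal_def]
        ring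
    _ = 1 / 2 := by
      rw [integral_add (integrable_const _) (hdiff.const_mul _), integral_const_mul,
        integral_sub hfi hfθ, hf.setIntegral_Ico_comp_add two_pi_pos.le, sub_self]
      simp

/-- In the rotated Gaussian mixture model (μ₁ uniform on the circle, μ₂ its rotation
by θ), every fixed measurable classifier has expected accuracy 1/2 over the random
choice of μ₁. -/
theorem stmt_12 (θ : ℝ) (hθ : θ ∈ Set.Ioo 0 π) (σ2 : NNReal) (hσ : σ2 ≠ 0)
    (h : ℝ × ℝ → Bool) (hh : Measurable h) :
    ∫ φ in Set.Ico (0 : ℝ) (2 * π),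
        ((1 : ℝ) / 2 *
            (((gaussianReal (cos φ) σ2).prod (gaussianReal (sin φ) σ2))
              {x : ℝ × ℝ | h x = false}).toReal
          + (1 : ℝ) / 2 *
            (((gaussianReal (cos (φ + θ)) σ2).prod (gaussianReal (sin (φ + θ)) σ2))
              {x : ℝ × ℝ | h x = true}).toReal)
        ∂((ENNReal.ofReal (2 * π))⁻¹ • volume) = 1 / 2 :=
  stmt_12_general θ σ2 h hh
end

section
/- If A ∈ ℝ^{d×d} satisfies Aᵀw = αw for some α > 0 and w ≠ 0, then for the random vector X and its transform AX + z (z ∈ ℝ^d fixed), the quantile-activation output of the transformed sample equals that of the original: F_{wᵀ(AX+z)}(wᵀ(Ax+z)) = F_{wᵀX}(wᵀx) for every x, assuming F_{wᵀX} is continuous and strictly increasing. -/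
/-!
Since `Aᵀ w = α w`, the form `wᵀ` turns `A v + z` into `α · wᵀ v + wᵀ z`, so the law of
`wᵀ (AX + z)` is the push-forward of the law of `wᵀ X` under a strictly increasing affine map `f`
of `ℝ`. As `f⁻¹ (-∞, f t] = (-∞, t]`, CDF ranks are invariant under such a push-forward.
-/

open MeasureTheory ProbabilityTheory Matrix

theorem Matrix.dotProduct_mulVec_add_of_transpose_mulVec_eq_smul {n R : Type*} [Fintype n]
    [CommSemiring R] {A : Matrix n n R} {w : n → R} {α : R} (hA : Aᵀ *ᵥ w = α • w)
    (v z : n → R) : w ⬝ᵥ (A *ᵥ v + z) = α * (w ⬝ᵥ v) + w ⬝ᵥ z := by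
  rw [dotProduct_add, dotProduct_mulVec, ← mulVec_transpose, hA, smul_dotProduct, smul_eq_mul]

theorem ProbabilityTheory.cdf_map_apply_of_strictMono {μ : Measure ℝ} [IsProbabilityMeasure μ]
    {f : ℝ → ℝ} (hf : StrictMono f) (x : ℝ) : cdf (μ.map f) (f x) = cdf μ x := by
  have hf_meas : Measurable f := hf.monotone.measurable
  have : IsProbabilityMeasure (μ.map f) := Measure.isProbabilityMeasure_map hf_meas.aemeasurable
  have hpre : f ⁻¹' Set.Iic (f x) = Set.Iic x := Set.ext fun _ => hf.le_iff_le
  rw [cdf_eq_real, cdf_eq_real, map_measureReal_apply hf_meas measurableSet_Iic, hpre]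

theorem stmt_19_general {d : ℕ} {Ω : Type*} [MeasurableSpace Ω] (P : Measure Ω)
    [IsProbabilityMeasure P] (X : Ω → (Fin d → ℝ)) (hX : Measurable X)
    (w : Fin d → ℝ)
    (A : Matrix (Fin d) (Fin d) ℝ) (α : ℝ) (hα : 0 < α)
    (hA : A.transpose *ᵥ w = α • w) (z : Fin d → ℝ)
    (x : Fin d → ℝ) :
    cdf (P.map fun ω => w ⬝ᵥ (A *ᵥ X ω + z)) (w ⬝ᵥ (A *ᵥ x + z))
      = cdf (P.map fun ω => w ⬝ᵥ X ω) (w ⬝ᵥ x) := by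
  set f : ℝ → ℝ := fun t => α * t + w ⬝ᵥ z
  have hf : StrictMono f := fun s t hst => by simp only [f]; gcongr
  have hY : Measurable fun ω => w ⬝ᵥ X ω := by fun_prop
  have hmap : (P.map fun ω => w ⬝ᵥ (A *ᵥ X ω + z)) = (P.map fun ω => w ⬝ᵥ X ω).map f := by
    rw [Measure.map_map hf.monotone.measurable hY]
    simp only [dotProduct_mulVec_add_of_transpose_mulVec_eq_smul hA]
    rfl
  have : IsProbabilityMeasure (P.map fun ω => w ⬝ᵥ X ω) :=
    Measure.isProbabilityMeasure_map hY.aemeasurable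
  rw [hmap, dotProduct_mulVec_add_of_transpose_mulVec_eq_smul hA]
  exact cdf_map_apply_of_strictMono hf _

/-- If Aᵀw = αw with α > 0, then the quantile activation of a transformed sample
Ax + z (under the transformed distribution AX + z) equals the quantile activation of
the original sample x under X. -/
theorem stmt_19 {d : ℕ} {Ω : Type*} [MeasurableSpace Ω] (P : Measure Ω)
    [IsProbabilityMeasure P] (X : Ω → (Fin d → ℝ)) (hX : Measurable X)
    (w : Fin d → ℝ) (hw : w ≠ 0)
    (A : Matrix (Fin d) (Fin d) ℝ) (α : ℝ) (hα : 0 < α)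
    (hA : A.transpose *ᵥ w = α • w) (z : Fin d → ℝ)
    (hFc : Continuous (cdf (P.map fun ω => w ⬝ᵥ X ω)))
    (hFm : StrictMono (cdf (P.map fun ω => w ⬝ᵥ X ω))) (x : Fin d → ℝ) :
    cdf (P.map fun ω => w ⬝ᵥ (A *ᵥ X ω + z)) (w ⬝ᵥ (A *ᵥ x + z))
      = cdf (P.map fun ω => w ⬝ᵥ X ω) (w ⬝ᵥ x) :=
  stmt_19_general P X hX w A α hα hA z x
end
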